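/- Let m be a positive integer and n = 3m. Then there is a homotopy equivalence I(H_{n,1}) ≃ S^{2m−1}. -/

import Mathlib

/-! ## Simplicial complexes, realizations, and homotopy-theoretic notions -/

/-- The independence complex of a simple graph, as an abstract simplicial complex:
the collection of finite independent sets of vertices. -/
def indepCx {V : Type} (G : SimpleGraph V) : Set (Finset V) :=
  {s | ∀ u ∈ s, ∀ v ∈ s, ¬ G.Adj u v}

/-- The matching complex of a simple graph: the collection of finite sets of edges,
no two of which share an endpoint. -/
def matchCx {V : Type} (G : SimpleGraph V) : Set (Finset (Sym2 V)) :=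
  {s | (↑s : Set (Sym2 V)) ⊆ G.edgeSet ∧
    ∀ e ∈ s, ∀ e' ∈ s, e ≠ e' → ∀ x : V, x ∈ e → x ∉ e'}

/-- The geometric realization of an abstract simplicial complex `K` on vertex set `V`:
the space of convex-combination weight functions supported on a simplex of `K`. -/
def geom {V : Type} (K : Set (Finset V)) : Type :=
  {f : V → ℝ // (∃ s ∈ K, ∀ v, f v ≠ 0 → v ∈ s) ∧ (∀ v, 0 ≤ f v) ∧ ∑ᶠ v, f v = 1}

noncomputable instance geom.topInst {V : Type} (K : Set (Finset V)) :
    TopologicalSpace (geom K) :=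
  instTopologicalSpaceSubtype

/-- A continuous map is a homotopy equivalence. -/
def IsHtpyEquiv {X Y : Type} [TopologicalSpace X] [TopologicalSpace Y] (f : C(X, Y)) : Prop :=
  ∃ g : C(Y, X), (g.comp f).Homotopic (ContinuousMap.id X) ∧
    (f.comp g).Homotopic (ContinuousMap.id Y)

/-- Any singleton vertex set is independent. -/
lemma singleton_mem_indepCx {V : Type} (G : SimpleGraph V) (v : V) :
    ({v} : Finset V) ∈ indepCx G := by
  intro u hu w hw
  simp only [Finset.mem_singleton] at hu hw
  subst hu; subst hw
  exact G.irrefl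

/-- The point of a geometric realization corresponding to a vertex. -/
noncomputable def geomPt {V : Type} [DecidableEq V] {K : Set (Finset V)} (v : V)
    (h : ({v} : Finset V) ∈ K) : geom K := by
  refine ⟨fun w => if w = v then 1 else 0, ⟨{v}, h, fun w hw => ?_⟩, fun w => ?_, ?_⟩
  · by_cases hwv : w = v
    · simp [hwv]
    · simp [hwv] at hw
  · by_cases hwv : w = v <;> simp [hwv]
  · rw [finsum_eq_single _ v (fun x hx => if_neg hx)]
    simp

/-- The `k`-dimensional sphere. -/
def Sph (k : ℕ) : Type := Metric.sphere (0 : EuclideanSpace ℝ (Fin (k+1))) 1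

noncomputable instance Sph.topInst (k : ℕ) : TopologicalSpace (Sph k) := by
  unfold Sph; infer_instance

/-- A pointed topological space. -/
structure Ptd where
  carrier : Type
  [topInst : TopologicalSpace carrier]
  pt : carrier

attribute [instance] Ptd.topInst

/-- The one-point pointed space. -/
def Ptd.point : Ptd := { carrier := PUnit, pt := PUnit.unit }

/-- The `k`-sphere as a pointed space. -/
noncomputable def Ptd.sphere (k : ℕ) : Ptd where
  carrier := Sph k
  pt := ⟨EuclideanSpace.single 0 1, by
    simp [mem_sphere_iff_norm, EuclideanSpace.norm_single]⟩

/-- The wedge sum of two pointed spaces. -/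
def Ptd.wedge (X Y : Ptd) : Ptd where
  carrier := Quot (fun p q : X.carrier ⊕ Y.carrier => p = q ∨
    (p = Sum.inl X.pt ∧ q = Sum.inr Y.pt) ∨ (p = Sum.inr Y.pt ∧ q = Sum.inl X.pt))
  pt := Quot.mk _ (Sum.inl X.pt)

/-- The reduced suspension of a pointed space: in `X × [0,1]`, collapse
`X × {0} ∪ X × {1} ∪ {pt} × [0,1]` to a point. -/
def Ptd.susp (X : Ptd) : Ptd where
  carrier := Quot (fun p q : X.carrier × unitInterval => p = q ∨
    ((p.2 = 0 ∨ p.2 = 1 ∨ p.1 = X.pt) ∧ (q.2 = 0 ∨ q.2 = 1 ∨ q.1 = X.pt)))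
  pt := Quot.mk _ (X.pt, 0)

/-- Iterated reduced suspension `Σ^k`. -/
def Ptd.suspIter (k : ℕ) (X : Ptd) : Ptd := Ptd.susp^[k] X

/-- The wedge of `k` copies of a pointed space (the empty wedge being a point). -/
def Ptd.wedgeIter : ℕ → Ptd → Ptd
  | 0, _ => Ptd.point
  | k+1, X => (Ptd.wedgeIter k X).wedge X

/-- A finite wedge of spheres of prescribed dimensions (the empty wedge being a point). -/
noncomputable def wedgeOfSpheres : List ℕ → Ptd
  | [] => Ptd.point
  | d :: ds => (Ptd.sphere d).wedge (wedgeOfSpheres ds)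

/-- A space is `k`-connected (`k : ℤ`): it is nonempty whenever `k ≥ -1`, and every
continuous map from a sphere of dimension `≤ k` into it is null-homotopic. -/
def IsConn (X : Type) [TopologicalSpace X] (k : ℤ) : Prop :=
  (-1 ≤ k → Nonempty X) ∧
    ∀ i : ℕ, (i : ℤ) ≤ k → ∀ f : C(Sph i, X), ∃ x : X,
      f.Homotopic (ContinuousMap.const _ x)

/-! ## Inclusions of independence complexes of induced subgraphs -/

/-- Extension by zero of a function defined on a subset of `V`. -/
noncomputable def extendZero {V : Type} {S : Set V} (f : ↥S → ℝ) : V → ℝ :=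
  Function.extend Subtype.val f 0

lemma extendZero_mem {V : Type} {S : Set V} (f : ↥S → ℝ) (x : ↥S) :
    extendZero f ↑x = f x :=
  Subtype.val_injective.extend_apply f 0 x

lemma extendZero_not_mem {V : Type} {S : Set V} (f : ↥S → ℝ) {v : V} (h : v ∉ S) :
    extendZero f v = 0 :=
  Function.extend_apply' f (0 : V → ℝ) v (fun ⟨x, hx⟩ => h (hx ▸ x.2))

lemma finsum_extendZero {V : Type} {S : Set V} (f : ↥S → ℝ) :
    ∑ᶠ v, extendZero f v = ∑ᶠ x : ↥S, f x := by
  rw [show (fun x : ↥S => f x) = fun x : ↥S => extendZero f ↑x from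
      funext fun x => (extendZero_mem f x).symm,
    finsum_set_coe_eq_finsum_mem, ← finsum_mem_univ (f := extendZero f),
    finsum_mem_inter_support_eq' _ Set.univ S]
  intro x hx
  simp only [Set.mem_univ, true_iff]
  exact by_contra fun h => hx (extendZero_not_mem f h)

/-- An independent set of an induced subgraph is independent in the ambient graph. -/
lemma indep_image {V : Type} [DecidableEq V] (G : SimpleGraph V) (S : Set V)
    {s : Finset ↥S} (hs : s ∈ indepCx (G.induce S)) :
    s.image Subtype.val ∈ indepCx G := by
  intro u hu v hv
  simp only [Finset.mem_image] at hu hv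
  obtain ⟨u', hu', rfl⟩ := hu
  obtain ⟨v', hv', rfl⟩ := hv
  exact hs u' hu' v' hv'

/-- The inclusion of the realization of the independence complex of an induced
subgraph into that of the ambient graph (extension of weight functions by zero). -/
noncomputable def inclMap {V : Type} [DecidableEq V] (G : SimpleGraph V) (S : Set V) :
    C(geom (indepCx (G.induce S)), geom (indepCx G)) where
  toFun f := ⟨extendZero f.1, by
      obtain ⟨s, hsK, hsupp⟩ := f.2.1
      refine ⟨s.image Subtype.val, indep_image G S hsK, fun v hv => ?_⟩
      by_cases h : v ∈ S
      · rw [show v = ↑(⟨v, h⟩ : ↥S) from rfl, extendZero_mem] at hv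
        exact Finset.mem_image.2 ⟨⟨v, h⟩, hsupp _ hv, rfl⟩
      · exact absurd (extendZero_not_mem f.1 h) hv,
    fun v => by
      by_cases h : v ∈ S
      · rw [show v = ↑(⟨v, h⟩ : ↥S) from rfl, extendZero_mem]; exact f.2.2.1 _
      · rw [extendZero_not_mem f.1 h],
    by rw [finsum_extendZero]; exact f.2.2.2⟩
  continuous_toFun := by
    apply Continuous.subtype_mk
    apply continuous_pi
    intro v
    by_cases h : v ∈ S
    · have : (fun f : geom (indepCx (G.induce S)) => extendZero f.1 v) =
        fun f : geom (indepCx (G.induce S)) => f.1 ⟨v, h⟩ :=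
        funext fun f => extendZero_mem f.1 ⟨v, h⟩
      rw [this]
      exact (continuous_apply _).comp continuous_subtype_val
    · have : (fun f : geom (indepCx (G.induce S)) => extendZero f.1 v) =
        fun _ => (0 : ℝ) := funext fun f => extendZero_not_mem f.1 h
      rw [this]
      exact continuous_const

/-! ## The graphs `G_{n,t}` and `H_{n,t}` (line graphs of polygonal line tilings) -/

/-- Ambient vertex names for the graphs `G_{n,t}`: `a i`, `b i j`, `c i j`. -/
inductive GV : Type
  | a : ℕ → GV
  | b : ℕ → ℕ → GV
  | c : ℕ → ℕ → GV
deriving DecidableEq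

/-- The base adjacency rules of `G_{n,t}` on the ambient vertex names (the parameter
`t` is handled by restricting to the appropriate vertex set). -/
def gRel (n : ℕ) : GV → GV → Prop
  | .a i, .b i' j => i' = i + 1 ∧ (j = 1 ∨ j = n - 1)
  | .a i, .c i' j => i' = i ∧ (j = 1 ∨ j = n - 1)
  | .b i j, .b i' j' => (i' = i ∧ j' = j + 1) ∨ (i' = i + 1 ∧ j = n - 1 ∧ j' = 1)
  | .c i j, .c i' j' => (i' = i ∧ j' = j + 1) ∨ (i' = i + 1 ∧ j = n - 1 ∧ j' = 1)
  | _, _ => False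

/-- The graph on all ambient vertex names with the adjacency rules of the `G_{n,t}`. -/
def gFull (n : ℕ) : SimpleGraph GV := SimpleGraph.fromRel (gRel n)

/-- The vertex set of `G_{n,t}`:
`{a_0, …, a_t} ∪ {b_{i,j}, c_{i,j} : 1 ≤ i ≤ t, 1 ≤ j ≤ n-1}`. -/
def GVset (n t : ℕ) : Set GV :=
  {v | match v with
    | .a i => i ≤ t
    | .b i j => 1 ≤ i ∧ i ≤ t ∧ 1 ≤ j ∧ j ≤ n - 1
    | .c i j => 1 ≤ i ∧ i ≤ t ∧ 1 ≤ j ∧ j ≤ n - 1}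

/-- The graph `G_{n,t}`, the line graph of the polygonal line tiling of `t` `2n`-gons. -/
def lineG (n t : ℕ) : SimpleGraph (GVset n t) := (gFull n).induce (GVset n t)

/-- The vertex set of `H_{n,t}`: that of `G_{n,t}` plus `b_{t+1,1}` and `c_{t+1,1}`. -/
def HVset (n t : ℕ) : Set GV := GVset n t ∪ {GV.b (t+1) 1, GV.c (t+1) 1}

/-- The graph `H_{n,t}`, the induced subgraph of `G_{n,t+1}` on
`V(G_{n,t}) ∪ {b_{t+1,1}, c_{t+1,1}}`. -/
def lineH (n t : ℕ) : SimpleGraph (HVset n t) := (gFull n).induce (HVset n t)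

lemma a0_mem_GVset (n t : ℕ) : GV.a 0 ∈ GVset n t := by simp [GVset]

lemma a0_mem_HVset (n t : ℕ) : GV.a 0 ∈ HVset n t := Or.inl (a0_mem_GVset n t)

/-- The realization of `I(G_{n,t})`, pointed at the vertex `a_0`. -/
noncomputable def IG (n t : ℕ) : Ptd where
  carrier := geom (indepCx (lineG n t))
  pt := geomPt ⟨GV.a 0, a0_mem_GVset n t⟩ (singleton_mem_indepCx _ _)

/-- The realization of `I(H_{n,t})`, pointed at the vertex `a_0`. -/
noncomputable def IH (n t : ℕ) : Ptd where
  carrier := geom (indepCx (lineH n t))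
  pt := geomPt ⟨GV.a 0, a0_mem_HVset n t⟩ (singleton_mem_indepCx _ _)

/-- The vertex set of `X_t = G_{n,t} ∖ a_{t-1}`. -/
def XVset (n t : ℕ) : Set GV := GVset n t \ {GV.a (t-1)}

/-- The graph `X_t = G_{n,t} ∖ a_{t-1}`. -/
def lineX (n t : ℕ) : SimpleGraph (XVset n t) := (gFull n).induce (XVset n t)

/-- The vertex set of `Y_t = X_t ∖ a_{t-2}`. -/
def YVset (n t : ℕ) : Set GV := XVset n t \ {GV.a (t-2)}

/-- The graph `Y_t = X_t ∖ a_{t-2}`. -/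
def lineY (n t : ℕ) : SimpleGraph (YVset n t) := (gFull n).induce (YVset n t)

lemma a0_mem_XVset {n t : ℕ} (ht : 2 ≤ t) : GV.a 0 ∈ XVset n t := by
  refine ⟨a0_mem_GVset n t, fun h => ?_⟩
  rw [Set.mem_singleton_iff] at h
  injection h with h'
  omega

lemma a0_mem_YVset {n t : ℕ} (ht : 3 ≤ t) : GV.a 0 ∈ YVset n t := by
  refine ⟨a0_mem_XVset (by omega), fun h => ?_⟩
  rw [Set.mem_singleton_iff] at h
  injection h with h'
  omega

/-- The realization of `I(X_t)`, pointed at the vertex `a_0` (for `t ≥ 2`). -/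
noncomputable def IX (n t : ℕ) (ht : 2 ≤ t) : Ptd where
  carrier := geom (indepCx (lineX n t))
  pt := geomPt ⟨GV.a 0, a0_mem_XVset ht⟩ (singleton_mem_indepCx _ _)

/-- The realization of `I(Y_t)`, pointed at the vertex `a_0` (for `t ≥ 3`). -/
noncomputable def IY (n t : ℕ) (ht : 3 ≤ t) : Ptd where
  carrier := geom (indepCx (lineY n t))
  pt := geomPt ⟨GV.a 0, a0_mem_YVset ht⟩ (singleton_mem_indepCx _ _)

/-! ## The polygonal line tilings `P_{n,t}` themselves -/

/-- Ambient vertex names for the tiling `P_{n,t}`: `u i`/`v i` are the endpoints of the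
`i`-th shared (vertical) edge, and `p i j` / `q i j` are the intermediate vertices of
the top/bottom boundary path of the `i`-th polygon. -/
inductive PV : Type
  | u : ℕ → PV
  | v : ℕ → PV
  | p : ℕ → ℕ → PV
  | q : ℕ → ℕ → PV
deriving DecidableEq

/-- The base adjacency rules of the tiling `P_{n,t}` on the ambient vertex names. -/
def pRel (n : ℕ) : PV → PV → Prop
  | .u i, .v i' => i' = i
  | .u i, .u i' => i' = i + 1 ∧ n = 2
  | .v i, .v i' => i' = i + 1 ∧ n = 2
  | .u i, .p i' j => (i' = i + 1 ∧ j = 1) ∨ (i' = i ∧ j = n - 2)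
  | .v i, .q i' j => (i' = i + 1 ∧ j = 1) ∨ (i' = i ∧ j = n - 2)
  | .p i j, .p i' j' => i' = i ∧ j' = j + 1
  | .q i j, .q i' j' => i' = i ∧ j' = j + 1
  | _, _ => False

/-- The graph on all ambient tiling vertex names. -/
def pFull (n : ℕ) : SimpleGraph PV := SimpleGraph.fromRel (pRel n)

/-- The vertex set of `P_{n,t}`. -/
def PVset (n t : ℕ) : Set PV :=
  {w | match w with
    | .u i => i ≤ t
    | .v i => i ≤ t
    | .p i j => 1 ≤ i ∧ i ≤ t ∧ 1 ≤ j ∧ j ≤ n - 2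
    | .q i j => 1 ≤ i ∧ i ≤ t ∧ 1 ≤ j ∧ j ≤ n - 2}

/-- The polygonal line tiling `P_{n,t}` of `t` `2n`-gons. -/
def polyP (n t : ℕ) : SimpleGraph (PVset n t) := (pFull n).induce (PVset n t)

/-!
If every neighbour of a vertex `y` is also a neighbour of another vertex `x`, deleting `x` does
not change the homotopy type of the independence complex: moving the weight of `x` onto `y` is
a deformation retraction, because adding `y` to an independent set through `x` keeps it
independent. In `H_{3m,1}` such folds delete `a₁`, `a₀` and then every third vertex along the two
remaining paths `b_{1,1}, …, b_{1,3m-1}, b_{2,1}` and `c_{1,1}, …, c_{1,3m-1}, c_{2,1}`, leaving a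
perfect matching with `2m` edges. The independence complex of a perfect matching with `k` edges
is the boundary of the `k`-dimensional cross-polytope, i.e. the unit sphere of `ℓ¹(ℝᵏ)`, which
radial projection identifies with `S^{k-1}`.
-/

open scoped ContinuousMap

namespace geom

variable {V : Type} {K : Set (Finset V)}

@[ext] lemma ext {f g : geom K} (h : ∀ v, f.1 v = g.1 v) : f = g := Subtype.ext (funext h)

lemma continuous_apply (v : V) : Continuous fun f : geom K => f.1 v :=
  (_root_.continuous_apply v).comp continuous_subtype_val

lemma support_finite (f : geom K) : (Function.support f.1).Finite := by
  obtain ⟨s, -, hs⟩ := f.2.1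
  exact s.finite_toSet.subset fun v hv => hs v hv

def inclusion {L : Set (Finset V)} (h : K ⊆ L) : C(geom K, geom L) where
  toFun f := ⟨f.1, f.2.1.imp fun _ hs => ⟨h hs.1, hs.2⟩, f.2.2⟩
  continuous_toFun := continuous_subtype_val.subtype_mk _

/-- The straight-line homotopy, which stays inside the common simplices. -/
theorem homotopic_of_forall_exists_simplex {X : Type} [TopologicalSpace X] (f g : C(X, geom K))
    (h : ∀ x, ∃ s ∈ K, (∀ v, (f x).1 v ≠ 0 → v ∈ s) ∧ ∀ v, (g x).1 v ≠ 0 → v ∈ s) :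
    f.Homotopic g := by
  refine ⟨{ toFun := fun p => ⟨fun v => (1 - (p.1 : ℝ)) * (f p.2).1 v + p.1 * (g p.2).1 v,
              ?_, fun v => ?_, ?_⟩
            continuous_toFun := ?_
            map_zero_left := fun x => ?_
            map_one_left := fun x => ?_ }⟩
  · obtain ⟨s, hs, hf, hg⟩ := h p.2
    refine ⟨s, hs, fun v hv => ?_⟩
    by_cases hfv : (f p.2).1 v = 0
    · exact hg v fun hgv => hv (by simp [hfv, hgv])
    · exact hf v hfv
  · exact add_nonneg (mul_nonneg (sub_nonneg.2 p.1.2.2) ((f p.2).2.2.1 v))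
      (mul_nonneg p.1.2.1 ((g p.2).2.2.1 v))
  · have hfin (c : ℝ) (k : geom K) : (Function.support fun v => c * k.1 v).Finite :=
      (support_finite k).subset fun v hv => right_ne_zero_of_mul hv
    show ∑ᶠ v, ((1 - (p.1 : ℝ)) * (f p.2).1 v + p.1 * (g p.2).1 v) = 1
    rw [finsum_add_distrib (hfin _ _) (hfin _ _), ← mul_finsum,
      ← mul_finsum, (f p.2).2.2.2, (g p.2).2.2.2]
    ring
  · refine Continuous.subtype_mk (continuous_pi fun v => ?_) _
    have hf : Continuous fun p : unitInterval × X => (f p.2).1 v :=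
      (continuous_apply v).comp (f.continuous.comp continuous_snd)
    have hg : Continuous fun p : unitInterval × X => (g p.2).1 v :=
      (continuous_apply v).comp (g.continuous.comp continuous_snd)
    exact ((continuous_const.sub (continuous_subtype_val.comp continuous_fst)).mul hf).add
      ((continuous_subtype_val.comp continuous_fst).mul hg)
  · ext v; simp
  · ext v; simp

end geom

def indepCxOn {V : Type} (G : SimpleGraph V) (S : Set V) : Set (Finset V) :=
  {s | s ∈ indepCx G ∧ (↑s : Set V) ⊆ S}

section indepCxOn

variable {V : Type} {G : SimpleGraph V} {S T : Set V}

lemma indepCxOn_mono (h : S ⊆ T) : indepCxOn G S ⊆ indepCxOn G T :=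
  fun _ hs => ⟨hs.1, hs.2.trans h⟩

lemma geom_indepCxOn_apply_eq_zero (f : geom (indepCxOn G S)) {v : V} (hv : v ∉ S) :
    f.1 v = 0 := by
  by_contra h
  obtain ⟨s, hs, hsupp⟩ := f.2.1
  exact hv (hs.2 (hsupp v h))

lemma extendZero_restrict_geom_indepCxOn (f : geom (indepCxOn G S)) :
    extendZero (fun x : S => f.1 x) = f.1 := by
  funext v
  by_cases h : v ∈ S
  · exact extendZero_mem _ ⟨v, h⟩
  · rw [extendZero_not_mem _ h, geom_indepCxOn_apply_eq_zero f h]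

variable [DecidableEq V] (G S)

noncomputable def geomIndepCxInduceHomeomorph :
    geom (indepCx (G.induce S)) ≃ₜ geom (indepCxOn G S) where
  toFun f := ⟨(inclMap G S f).1, by
      obtain ⟨s, hs, hsupp⟩ := f.2.1
      refine ⟨s.image Subtype.val, ⟨indep_image G S hs, by simp⟩, fun v hv => ?_⟩
      by_cases h : v ∈ S
      · rw [show v = ↑(⟨v, h⟩ : S) from rfl] at hv ⊢
        exact Finset.mem_image_of_mem _ (hsupp _ ((extendZero_mem f.1 _).symm.trans_ne hv))
      · exact absurd (extendZero_not_mem f.1 h) hv,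
    (inclMap G S f).2.2⟩
  invFun f := ⟨fun x => f.1 x, by
      obtain ⟨s, hs, hsupp⟩ := f.2.1
      exact ⟨s.preimage Subtype.val Subtype.val_injective.injOn,
        fun u hu v hv => hs.1 _ (Finset.mem_preimage.1 hu) _ (Finset.mem_preimage.1 hv),
        fun x hx => Finset.mem_preimage.2 (hsupp _ hx)⟩,
    fun x => f.2.2.1 x,
    by rw [← finsum_extendZero, extendZero_restrict_geom_indepCxOn]; exact f.2.2.2⟩
  left_inv f := geom.ext fun x => extendZero_mem f.1 x
  right_inv f := geom.ext fun v => congrFun (extendZero_restrict_geom_indepCxOn f) v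
  continuous_toFun := continuous_subtype_val.comp (inclMap G S).continuous |>.subtype_mk _
  continuous_invFun := Continuous.subtype_mk (continuous_pi fun x => geom.continuous_apply _) _

end indepCxOn

section Fold

variable {V : Type} [DecidableEq V] {G : SimpleGraph V} {S : Set V} {x y : V}

def foldWeights (x y : V) (f : V → ℝ) : V → ℝ := f + Pi.single y (f x) - Pi.single x (f x)

lemma continuous_foldWeights : Continuous (foldWeights (V := V) x y) :=
  (continuous_id.add ((continuous_single y).comp (continuous_apply x))).sub
    ((continuous_single x).comp (continuous_apply x))

lemma foldWeights_apply_self (hyx : y ≠ x) (f : V → ℝ) : foldWeights x y f x = 0 := by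
  simp [foldWeights, hyx.symm]

lemma foldWeights_of_eq_zero {f : V → ℝ} (h : f x = 0) : foldWeights x y f = f := by
  simp [foldWeights, h]

lemma foldWeights_nonneg {f : V → ℝ} (hf : ∀ v, 0 ≤ f v) (v : V) : 0 ≤ foldWeights x y f v := by
  have := hf v
  have := hf x
  simp only [foldWeights, Pi.add_apply, Pi.sub_apply, Pi.single_apply]
  split_ifs <;> subst_vars <;> linarith

lemma support_foldWeights_subset (f : V → ℝ) :
    Function.support (foldWeights x y f) ⊆ insert y (Function.support f) := by
  intro v hv
  by_contra h
  simp only [Set.mem_insert_iff, Function.mem_support, not_or, not_not] at h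
  by_cases hvx : v = x
  · subst hvx; simp [foldWeights, h.2] at hv
  · simp [foldWeights, h.1, h.2, hvx] at hv

lemma finsum_foldWeights {f : V → ℝ} (hf : (Function.support f).Finite) :
    ∑ᶠ v, foldWeights x y f v = ∑ᶠ v, f v := by
  have hsingle (z : V) : (Function.support (Pi.single z (f x) : V → ℝ)).Finite :=
    (Set.finite_singleton z).subset (Pi.support_single_subset)
  have hsum (z : V) : ∑ᶠ v, (Pi.single z (f x) : V → ℝ) v = f x := by
    rw [finsum_eq_single _ z fun v hv => Pi.single_eq_of_ne hv _, Pi.single_eq_same]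
  simp only [foldWeights, Pi.sub_apply, Pi.add_apply]
  rw [finsum_sub_distrib (hf.union (hsingle y) |>.subset (Function.support_add _ _)) (hsingle x),
    finsum_add_distrib hf (hsingle y), hsum, hsum, add_sub_cancel_right]

lemma insert_mem_indepCxOn {s : Finset V} (hs : s ∈ indepCxOn G S) (hx : x ∈ s) (hy : y ∈ S)
    (hdom : ∀ w ∈ S, G.Adj y w → G.Adj x w) : insert y s ∈ indepCxOn G S := by
  refine ⟨fun u hu v hv hadj => ?_, by simpa using Set.insert_subset hy hs.2⟩
  rcases Finset.mem_insert.1 hu with rfl | hu' <;> rcases Finset.mem_insert.1 hv with rfl | hv'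
  · exact G.irrefl hadj
  · exact hs.1 x hx v hv' (hdom v (hs.2 hv') hadj)
  · exact hs.1 x hx u hu' (hdom u (hs.2 hu') hadj.symm)
  · exact hs.1 u hu' v hv' hadj

variable (hy : y ∈ S) (hdom : ∀ w ∈ S, G.Adj y w → G.Adj x w)
include hy hdom

/-- Either `x` carries no weight, or `y` may be added to any independent set through `x`. -/
lemma exists_indepCxOn_support_foldWeights (f : geom (indepCxOn G S)) :
    ∃ t ∈ indepCxOn G S, (∀ v, f.1 v ≠ 0 → v ∈ t) ∧ ∀ v, foldWeights x y f.1 v ≠ 0 → v ∈ t := by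
  obtain ⟨s, hs, hsupp⟩ := f.2.1
  by_cases h0 : f.1 x = 0
  · exact ⟨s, hs, hsupp, by rwa [foldWeights_of_eq_zero h0]⟩
  refine ⟨insert y s, insert_mem_indepCxOn hs (hsupp x h0) hy hdom,
    fun v hv => Finset.mem_insert_of_mem (hsupp v hv), fun v hv => ?_⟩
  rcases support_foldWeights_subset f.1 hv with rfl | hv
  · exact Finset.mem_insert_self _ _
  · exact Finset.mem_insert_of_mem (hsupp v hv)

variable (hyx : y ≠ x)
include hyx

noncomputable def foldMap : C(geom (indepCxOn G S), geom (indepCxOn G (S \ {x}))) where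
  toFun f := ⟨foldWeights x y f.1, by
      obtain ⟨t, ht, -, hfold⟩ := exists_indepCxOn_support_foldWeights hy hdom f
      refine ⟨t.erase x, ⟨fun u hu v hv => ht.1 u (Finset.mem_of_mem_erase hu) v
        (Finset.mem_of_mem_erase hv), fun v hv => ?_⟩, fun v hv => ?_⟩
      · rw [Finset.coe_erase] at hv
        exact ⟨ht.2 hv.1, hv.2⟩
      · refine Finset.mem_erase.2 ⟨?_, hfold v hv⟩
        rintro rfl
        exact hv (foldWeights_apply_self hyx _),
    foldWeights_nonneg f.2.2.1,
    by rw [finsum_foldWeights (geom.support_finite f)]; exact f.2.2.2⟩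
  continuous_toFun :=
    (continuous_foldWeights.comp continuous_subtype_val).subtype_mk _

noncomputable def foldHomotopyEquiv :
    geom (indepCxOn G S) ≃ₕ geom (indepCxOn G (S \ {x})) where
  toFun := foldMap hy hdom hyx
  invFun := geom.inclusion (indepCxOn_mono Set.sdiff_subset)
  left_inv := geom.homotopic_of_forall_exists_simplex _ _ fun f => by
    obtain ⟨t, ht, hf, hfold⟩ := exists_indepCxOn_support_foldWeights hy hdom f
    exact ⟨t, ht, hfold, hf⟩
  right_inv := by
    convert ContinuousMap.Homotopic.refl _
    ext f v
    exact (congrFun (foldWeights_of_eq_zero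
      (geom_indepCxOn_apply_eq_zero f fun h : x ∈ S \ {x} => h.2 rfl)) v).symm

end Fold

lemma posPart_sub_of_mul_eq_zero {a b : ℝ} (ha : 0 ≤ a) (hb : 0 ≤ b) (hab : a * b = 0) :
    (a - b)⁺ = a := by
  rcases mul_eq_zero.1 hab with rfl | rfl
  · simpa using hb
  · simpa using ha

lemma negPart_sub_of_mul_eq_zero {a b : ℝ} (ha : 0 ≤ a) (hb : 0 ≤ b) (hab : a * b = 0) :
    (a - b)⁻ = b := by
  rw [← posPart_neg, neg_sub, posPart_sub_of_mul_eq_zero hb ha (by rw [mul_comm, hab])]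

section Matching

variable {V ι : Type} [DecidableEq V] [Fintype ι] {G : SimpleGraph V} {S : Set V}
  {e : ι × Bool → V}

lemma finsum_eq_sum_comp_of_support_subset_range (he : e.Injective) {w : V → ℝ}
    (hw : Function.support w ⊆ Set.range e) : ∑ᶠ v, w v = ∑ p, w (e p) := by
  rw [finsum_eq_sum_of_support_subset w (s := Finset.univ.image e) (by simpa using hw),
    Finset.sum_image fun p _ q _ h => he h]

def splitParts (z : ι → ℝ) : ι × Bool → ℝ
  | (i, true) => (z i)⁺
  | (i, false) => (z i)⁻

lemma sum_splitParts (z : ι → ℝ) : ∑ p, splitParts z p = ∑ i, |z i| := by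
  simp [Fintype.sum_prod_type, splitParts, posPart_add_negPart]

lemma continuous_extend_splitParts (he : e.Injective) :
    Continuous fun z : ι → ℝ => Function.extend e (splitParts z) (0 : V → ℝ) := by
  refine continuous_pi fun v => ?_
  by_cases h : ∃ p, e p = v
  · obtain ⟨⟨i, _ | _⟩, rfl⟩ := h <;> simp only [he.extend_apply, splitParts] <;> fun_prop
  · simp only [Function.extend_apply' _ _ _ h]
    exact continuous_const

omit [Fintype ι] in
lemma splitParts_eq_zero_or {p q : ι × Bool} (z : ι → ℝ) (h1 : p.1 = q.1) (h2 : p.2 ≠ q.2) :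
    splitParts z p = 0 ∨ splitParts z q = 0 := by
  obtain ⟨i, b⟩ := p
  obtain ⟨j, c⟩ := q
  obtain rfl : i = j := h1
  rcases le_total (z i) 0 with h | h <;> cases b <;> cases c <;> simp_all [splitParts]

omit [DecidableEq V] [Fintype ι] in
lemma extend_splitParts_nonneg (he : e.Injective) (z : ι → ℝ) (v : V) :
    0 ≤ Function.extend e (splitParts z) 0 v := by
  by_cases h : ∃ p, e p = v
  · obtain ⟨⟨i, _ | _⟩, rfl⟩ := h <;> simp [he.extend_apply, splitParts]
  · simp [Function.extend_apply' _ _ _ h]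

lemma finsum_extend_splitParts (he : e.Injective) (z : ι → ℝ) :
    ∑ᶠ v, Function.extend e (splitParts z) 0 v = ∑ i, |z i| := by
  rw [finsum_eq_sum_comp_of_support_subset_range he, ← sum_splitParts]
  · simp only [he.extend_apply]
  · rw [Function.support_extend_zero he]
    exact Set.image_subset_range _ _

variable (hadj : ∀ p q, G.Adj (e p) (e q) ↔ p.1 = q.1 ∧ p.2 ≠ q.2)
include hadj

lemma exists_indepCxOn_support_extend_splitParts (he : e.Injective) (hS : Set.range e = S)
    (z : ι → ℝ) :
    ∃ s ∈ indepCxOn G S, ∀ v, Function.extend e (splitParts z) 0 v ≠ 0 → v ∈ s := by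
  refine ⟨(Finset.univ.filter fun p => splitParts z p ≠ 0).image e, ⟨?_, by simp [← hS]⟩, ?_⟩
  · intro u hu v hv huv
    obtain ⟨p, hp, rfl⟩ := Finset.mem_image.1 hu
    obtain ⟨q, hq, rfl⟩ := Finset.mem_image.1 hv
    rw [Finset.mem_filter] at hp hq
    obtain ⟨h1, h2⟩ := (hadj p q).1 huv
    rcases splitParts_eq_zero_or z h1 h2 with h | h
    exacts [hp.2 h, hq.2 h]
  · intro v hv
    obtain ⟨p, hp, rfl⟩ := (Function.support_extend_zero he).subset hv
    exact Finset.mem_image_of_mem _ (by simpa using hp)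

omit [DecidableEq V] [Fintype ι] in
lemma geom_indepCxOn_matching_mul_eq_zero (f : geom (indepCxOn G S)) (i : ι) :
    f.1 (e (i, true)) * f.1 (e (i, false)) = 0 := by
  obtain ⟨s, hs, hsupp⟩ := f.2.1
  by_contra h
  obtain ⟨h1, h2⟩ := mul_ne_zero_iff.1 h
  exact hs.1 _ (hsupp _ h1) _ (hsupp _ h2) ((hadj _ _).2 ⟨rfl, by simp⟩)

omit hadj in
lemma sum_geom_indepCxOn_matching (he : e.Injective) (hS : Set.range e = S)
    (f : geom (indepCxOn G S)) : ∑ p, f.1 (e p) = 1 := by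
  rw [← finsum_eq_sum_comp_of_support_subset_range he fun v hv => ?_]
  · exact f.2.2.2
  · by_contra h
    exact hv (geom_indepCxOn_apply_eq_zero f (hS ▸ h))

/-- A weight function on a perfect matching is determined by the signed differences across
its edges, since each edge carries weight on at most one end. -/
noncomputable def geomIndepCxOnMatchingHomeomorph (he : e.Injective) (hS : Set.range e = S) :
    geom (indepCxOn G S) ≃ₜ Metric.sphere (0 : PiLp 1 fun _ : ι => ℝ) 1 where
  toFun f := ⟨WithLp.toLp 1 fun i => f.1 (e (i, true)) - f.1 (e (i, false)), by
    rw [mem_sphere_zero_iff_norm, PiLp.norm_eq_of_L1]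
    refine .trans ?_ (sum_geom_indepCxOn_matching he hS f)
    rw [Fintype.sum_prod_type]
    refine Finset.sum_congr rfl fun i _ => ?_
    have h0 := geom_indepCxOn_matching_mul_eq_zero hadj f i
    rw [Real.norm_eq_abs, ← posPart_add_negPart,
      posPart_sub_of_mul_eq_zero (f.2.2.1 _) (f.2.2.1 _) h0,
      negPart_sub_of_mul_eq_zero (f.2.2.1 _) (f.2.2.1 _) h0, Fintype.sum_bool]⟩
  invFun z := ⟨Function.extend e (splitParts z.1) 0,
    exists_indepCxOn_support_extend_splitParts hadj he hS z.1,
    extend_splitParts_nonneg he z.1,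
    by
      have hz := mem_sphere_zero_iff_norm.1 z.2
      rw [PiLp.norm_eq_of_L1] at hz
      rw [finsum_extend_splitParts he]
      exact hz⟩
  left_inv f := geom.ext fun v => by
    show Function.extend e _ 0 v = f.1 v
    by_cases h : ∃ p, e p = v
    · obtain ⟨⟨i, _ | _⟩, rfl⟩ := h <;>
        simp only [he.extend_apply, splitParts]
      · exact negPart_sub_of_mul_eq_zero (f.2.2.1 _) (f.2.2.1 _)
          (geom_indepCxOn_matching_mul_eq_zero hadj f i)
      · exact posPart_sub_of_mul_eq_zero (f.2.2.1 _) (f.2.2.1 _)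
          (geom_indepCxOn_matching_mul_eq_zero hadj f i)
    · rw [Function.extend_apply' _ _ _ h, Pi.zero_apply,
        geom_indepCxOn_apply_eq_zero f (hS ▸ fun ⟨p, hp⟩ => h ⟨p, hp⟩)]
  right_inv z := Subtype.ext <| PiLp.ext fun i => by
    simp [he.extend_apply, splitParts, posPart_sub_negPart]
  continuous_toFun := by
    refine ((PiLp.continuous_toLp 1 _).comp (continuous_pi fun i => ?_)).subtype_mk _
    exact (geom.continuous_apply _).sub (geom.continuous_apply _)
  continuous_invFun := ((continuous_extend_splitParts he).comp
    ((PiLp.continuous_ofLp 1 _).comp continuous_subtype_val)).subtype_mk _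

end Matching

section UnitSphere

variable {E F : Type*} [NormedAddCommGroup E] [NormedSpace ℝ E] [NormedAddCommGroup F]
  [NormedSpace ℝ F]

lemma ContinuousLinearEquiv.apply_ne_zero_of_mem_unit_sphere (L : E ≃L[ℝ] F)
    (x : Metric.sphere (0 : E) 1) : L x ≠ 0 :=
  L.map_ne_zero_iff.2 (ne_zero_of_mem_unit_sphere x)

lemma ContinuousLinearEquiv.continuous_normalize_unit_sphere (L : E ≃L[ℝ] F) :
    Continuous fun x : Metric.sphere (0 : E) 1 => ‖L x‖⁻¹ • L x := by
  have hL : Continuous fun x : Metric.sphere (0 : E) 1 => L x :=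
    L.continuous.comp continuous_subtype_val
  exact (hL.norm.inv₀ fun x => norm_ne_zero_iff.2 (L.apply_ne_zero_of_mem_unit_sphere x)).smul hL

noncomputable def ContinuousLinearEquiv.unitSphereHomeomorph (L : E ≃L[ℝ] F) :
    Metric.sphere (0 : E) 1 ≃ₜ Metric.sphere (0 : F) 1 where
  toFun x := ⟨‖L x‖⁻¹ • L x, by simp [norm_smul, L.apply_ne_zero_of_mem_unit_sphere x]⟩
  invFun y := ⟨‖L.symm y‖⁻¹ • L.symm y, by
    simp [norm_smul, L.symm.apply_ne_zero_of_mem_unit_sphere y]⟩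
  left_inv x := by
    ext1
    simp [norm_smul, smul_smul, L.apply_ne_zero_of_mem_unit_sphere x]
  right_inv y := by
    ext1
    simp [norm_smul, smul_smul, L.symm.apply_ne_zero_of_mem_unit_sphere y]
  continuous_toFun := by exact L.continuous_normalize_unit_sphere.subtype_mk _
  continuous_invFun := by exact L.symm.continuous_normalize_unit_sphere.subtype_mk _

end UnitSphere

/-- The vertices of `H_{3m,1}` left after deleting `a₀, a₁` and then, on each of the two paths
`b_{1,1}, …, b_{1,3m-1}, b_{2,1}` and `c_{1,1}, …, c_{1,3m-1}, c_{2,1}`, the vertices at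
positions `3, 6, …, 3k`. -/
def foldStage (m k : ℕ) : Set GV :=
  {v | match v with
    | .a _ => False
    | .b i j | .c i j => (i = 1 ∧ 1 ≤ j ∧ j < 3 * m ∧ ¬ (3 ∣ j ∧ j ≤ 3 * k)) ∨ (i = 2 ∧ j = 1 ∧ k < m)}

section FoldChain

variable {m : ℕ}

local notation "𝒢" => gFull (3 * m)

lemma nonempty_homotopyEquiv_foldStage_zero (hm : 0 < m) :
    Nonempty (geom (indepCxOn 𝒢 (HVset (3 * m) 1)) ≃ₕ geom (indepCxOn 𝒢 (foldStage m 0))) := by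
  have hfold : (HVset (3 * m) 1 \ {GV.a 1}) \ {GV.a 0} = foldStage m 0 := by
    ext (i | ⟨i, j⟩ | ⟨i, j⟩) <;> simp [HVset, GVset, foldStage] <;> omega
  rw [← hfold]
  refine ⟨(foldHomotopyEquiv (y := GV.c 2 1) ?_ ?_ (by simp)).trans
    (foldHomotopyEquiv (y := GV.b 2 1) ?_ ?_ (by simp))⟩
  · simp [HVset]
  · rintro (i | ⟨i, j⟩ | ⟨i, j⟩) hw hadj <;>
      simp [HVset, GVset, gFull, gRel] at hw hadj ⊢ <;> omega
  · simp [HVset]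
  · rintro (i | ⟨i, j⟩ | ⟨i, j⟩) hw hadj <;>
      simp [HVset, GVset, gFull, gRel] at hw hadj ⊢ <;> omega

lemma nonempty_homotopyEquiv_foldStage_succ {k : ℕ} (hk : k < m) :
    Nonempty (geom (indepCxOn 𝒢 (foldStage m k)) ≃ₕ geom (indepCxOn 𝒢 (foldStage m (k + 1)))) := by
  set xb := if k + 1 < m then GV.b 1 (3 * k + 3) else GV.b 2 1
  set xc := if k + 1 < m then GV.c 1 (3 * k + 3) else GV.c 2 1
  have hfold : (foldStage m k \ {xb}) \ {xc} = foldStage m (k + 1) := by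
    ext (i | ⟨i, j⟩ | ⟨i, j⟩) <;> simp [xb, xc, foldStage] <;> split_ifs <;> simp <;> omega
  rw [← hfold]
  refine ⟨(foldHomotopyEquiv (y := GV.b 1 (3 * k + 1)) ?_ ?_ ?_).trans
    (foldHomotopyEquiv (y := GV.c 1 (3 * k + 1)) ?_ ?_ ?_)⟩
  · simp [foldStage]; omega
  · rintro (i | ⟨i, j⟩ | ⟨i, j⟩) hw hadj
    all_goals simp [xb, foldStage, gFull, gRel] at hw hadj ⊢
    all_goals split_ifs <;> simp <;> omega
  · simp only [xb]; split_ifs <;> simp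
  · simp [xb, foldStage]; split_ifs <;> simp <;> omega
  · rintro (i | ⟨i, j⟩ | ⟨i, j⟩) hw hadj
    all_goals simp [xb, xc, foldStage, gFull, gRel] at hw hadj ⊢
    all_goals split_ifs at hw ⊢ <;> simp at hw ⊢ <;> omega
  · simp only [xc]; split_ifs <;> simp

lemma nonempty_homotopyEquiv_foldStage (hm : 0 < m) :
    ∀ k ≤ m, Nonempty (geom (indepCxOn 𝒢 (HVset (3 * m) 1)) ≃ₕ geom (indepCxOn 𝒢 (foldStage m k)))
  | 0, _ => nonempty_homotopyEquiv_foldStage_zero hm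
  | k + 1, hk => by
    obtain ⟨e₁⟩ := nonempty_homotopyEquiv_foldStage hm k (by omega)
    obtain ⟨e₂⟩ := nonempty_homotopyEquiv_foldStage_succ (m := m) (k := k) (by omega)
    exact ⟨e₁.trans e₂⟩

end FoldChain

def foldStageMatching (m : ℕ) : (Bool × Fin m) × Bool → GV
  | ((true, k), s) => GV.b 1 (3 * k + cond s 2 1)
  | ((false, k), s) => GV.c 1 (3 * k + cond s 2 1)

lemma foldStageMatching_injective (m : ℕ) : (foldStageMatching m).Injective := by
  rintro ⟨⟨_ | _, k⟩, _ | _⟩ ⟨⟨_ | _, l⟩, _ | _⟩ h <;>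
    simp [foldStageMatching, Fin.ext_iff] at h ⊢ <;> omega

lemma range_foldStageMatching (m : ℕ) : Set.range (foldStageMatching m) = foldStage m m := by
  ext (i | ⟨i, j⟩ | ⟨i, j⟩) <;> simp only [Set.mem_range, foldStage, Set.mem_ofPred_eq]
  · simp only [iff_false, not_exists]
    rintro ⟨⟨_ | _, k⟩, _ | _⟩ <;> simp [foldStageMatching]
  · refine ⟨fun ⟨p, hp⟩ => ?_, fun h => ⟨((true, ⟨j / 3, by omega⟩), decide (j % 3 = 2)), ?_⟩⟩
    · obtain ⟨⟨_ | _, k⟩, _ | _⟩ := p <;> simp [foldStageMatching] at hp <;> omega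
    · by_cases h2 : j % 3 = 2 <;> simp [foldStageMatching, h2] <;> omega
  · refine ⟨fun ⟨p, hp⟩ => ?_, fun h => ⟨((false, ⟨j / 3, by omega⟩), decide (j % 3 = 2)), ?_⟩⟩
    · obtain ⟨⟨_ | _, k⟩, _ | _⟩ := p <;> simp [foldStageMatching] at hp <;> omega
    · by_cases h2 : j % 3 = 2 <;> simp [foldStageMatching, h2] <;> omega

lemma gFull_adj_foldStageMatching (m : ℕ) (p q : (Bool × Fin m) × Bool) :
    (gFull (3 * m)).Adj (foldStageMatching m p) (foldStageMatching m q) ↔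
      p.1 = q.1 ∧ p.2 ≠ q.2 := by
  obtain ⟨⟨_ | _, k⟩, _ | _⟩ := p <;> obtain ⟨⟨_ | _, l⟩, _ | _⟩ := q <;>
    simp [foldStageMatching, gFull, gRel, Fin.ext_iff] <;> omega

noncomputable def geomIndepCxOnFoldStageHomeomorph {m : ℕ} (hm : 0 < m) :
    geom (indepCxOn (gFull (3 * m)) (foldStage m m)) ≃ₜ Sph (2 * m - 1) :=
  let σ : Fin (2 * m - 1 + 1) × Bool ≃ (Bool × Fin m) × Bool :=
    (Fintype.equivOfCardEq (by simp; omega)).prodCongr (Equiv.refl Bool)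
  (geomIndepCxOnMatchingHomeomorph
    (fun p q => by
      rw [Function.comp_apply, Function.comp_apply, gFull_adj_foldStageMatching]
      simp [σ, Equiv.prodCongr_apply])
    ((foldStageMatching_injective m).comp σ.injective)
    (by rw [EquivLike.range_comp, range_foldStageMatching])).trans
  ((PiLp.continuousLinearEquiv 1 ℝ _).trans
    (PiLp.continuousLinearEquiv 2 ℝ _).symm).unitSphereHomeomorph

/-- For `m ≥ 1` and `n = 3m`, there is a homotopy equivalence
`I(H_{n,1}) ≃ S^{2m-1}`. -/
theorem stmt_19 (m : ℕ) (hm : 0 < m) :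
    Nonempty (ContinuousMap.HomotopyEquiv (geom (indepCx (lineH (3*m) 1)))
      (Sph (2*m-1))) := by
  obtain ⟨e⟩ := nonempty_homotopyEquiv_foldStage hm m le_rfl
  exact ⟨(geomIndepCxInduceHomeomorph (gFull (3 * m)) (HVset (3 * m) 1)).toHomotopyEquiv.trans
    (e.trans (geomIndepCxOnFoldStageHomeomorph hm).toHomotopyEquiv)⟩
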